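/- arXiv:2003.08911 — 2 statements merged into one kernel-verified Lean document; each statement's English description precedes it below -/
import Mathlib

section
/- Let L be a linear subspace of ℝ^n and L^⊥ its orthogonal complement. Then L ∩ ℝ^n_+ = {0} if and only if L^⊥ ∩ ℝ^n_{++} ≠ ∅, i.e., the only nonnegative vector in L is zero if and only if L^⊥ contains a vector with all entries strictly positive. -/
/-!
If a positive `s` is orthogonal to `L`, then `⟨s, x⟩ > 0` for every nonzero `x ≥ 0`, so no such `x`
lies in `L`. Conversely, if `L` meets the nonnegative orthant only in `0`, it is disjoint from the
standard simplex; Hahn–Banach separates the closed subspace `L` from this compact convex set by a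
functional, which must vanish on `L` (it is bounded on it) and is positive at every vertex `eᵢ`
of the simplex. Its coefficients `s i = f eᵢ` form the required positive vector of `L^⊥`.
-/

noncomputable section

/-- The orthogonal complement `L^⊥ = {s : ⟨s,x⟩ = 0 for all x ∈ L}`. -/
def perpSet {n : ℕ} (L : Set (Fin n → ℝ)) : Set (Fin n → ℝ) :=
  {s | ∀ x ∈ L, ∑ j, s j * x j = 0}

open Finset

lemma LinearMap.eq_zero_of_bddAbove_image_submodule {𝕜 M : Type*} [Field 𝕜] [LinearOrder 𝕜]
    [IsStrictOrderedRing 𝕜] [AddCommGroup M] [Module 𝕜 M] (f : M →ₗ[𝕜] 𝕜) (p : Submodule 𝕜 M)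
    (hf : BddAbove (f '' p)) {x : M} (hx : x ∈ p) : f x = 0 := by
  obtain ⟨u, hu⟩ := hf
  by_contra hfx
  have hle : f (((u + 1) / f x) • x) ≤ u := hu ⟨_, p.smul_mem _ hx, rfl⟩
  rw [map_smul, smul_eq_mul, div_mul_cancel₀ _ hfx] at hle
  linarith

lemma LinearMap.apply_eq_sum_apply_single_mul {ι R : Type*} [Fintype ι] [DecidableEq ι]
    [CommSemiring R] (f : (ι → R) →ₗ[R] R) (x : ι → R) :
    f x = ∑ i, f (Pi.single i 1) * x i := by
  rw [f.pi_apply_eq_sum_univ x]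
  refine sum_congr rfl fun i _ => ?_
  rw [smul_eq_mul, mul_comm]
  congr with j
  simp [Pi.single_apply, eq_comm]

lemma eq_zero_of_sum_mul_eq_zero {ι R : Type*} [Fintype ι] [Semiring R] [PartialOrder R]
    [IsOrderedRing R] [NoZeroDivisors R] {s x : ι → R} (hs : ∀ i, 0 < s i) (hx : ∀ i, 0 ≤ x i)
    (hsx : ∑ i, s i * x i = 0) : x = 0 := by
  have hterms := (sum_eq_zero_iff_of_nonneg fun i _ => mul_nonneg (hs i).le (hx i)).mp hsx
  funext i
  exact (mul_eq_zero.mp (hterms i (mem_univ i))).resolve_left (hs i).ne'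

lemma exists_pos_orthogonal_of_disjoint_stdSimplex {ι : Type*} [Fintype ι] [DecidableEq ι]
    (L : Submodule ℝ (ι → ℝ)) (hL : Disjoint (L : Set (ι → ℝ)) (stdSimplex ℝ ι)) :
    ∃ s : ι → ℝ, (∀ x ∈ L, ∑ i, s i * x i = 0) ∧ ∀ i, 0 < s i := by
  obtain ⟨f, u, v, hfL, huv, hfS⟩ := geometric_hahn_banach_closed_compact L.convex
    L.closed_of_finiteDimensional (convex_stdSimplex ℝ ι) (isCompact_stdSimplex ℝ ι) hL
  set g : (ι → ℝ) →ₗ[ℝ] ℝ := f.toLinearMap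
  have hg_bdd : BddAbove (g '' L) := ⟨u, by rintro _ ⟨x, hx, rfl⟩; exact (hfL x hx).le⟩
  have hu : 0 < u := by simpa using hfL 0 L.zero_mem
  refine ⟨fun i => f (Pi.single i 1), fun x hx => ?_, fun i => ?_⟩
  · exact (g.apply_eq_sum_apply_single_mul x).symm.trans
      (g.eq_zero_of_bddAbove_image_submodule L hg_bdd hx)
  · linarith [hfS _ (single_mem_stdSimplex ℝ i)]

/-- `L ∩ ℝⁿ₊ = {0}` if and only if `L^⊥ ∩ ℝⁿ₊₊ ≠ ∅`. -/
theorem inter_nonneg_eq_zero_iff_perp_pos {n : ℕ} (L : Submodule ℝ (Fin n → ℝ)) :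
    {x : Fin n → ℝ | x ∈ L ∧ ∀ k, 0 ≤ x k} = {0} ↔
      ∃ s ∈ perpSet (L : Set (Fin n → ℝ)), ∀ k, 0 < s k := by
  constructor
  · intro h
    refine exists_pos_orthogonal_of_disjoint_stdSimplex L
      (Set.disjoint_left.mpr fun x hxL hxS => ?_)
    have hx0 : x = 0 := h.subset ⟨hxL, hxS.1⟩
    simpa [hx0] using hxS.2
  · rintro ⟨s, hsL, hs⟩
    refine Set.eq_singleton_iff_unique_mem.mpr ⟨⟨L.zero_mem, fun _ => le_rfl⟩, ?_⟩
    rintro x ⟨hxL, hx⟩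
    exact eq_zero_of_sum_mul_eq_zero hs hx (hsL x hxL)

end
end

section
/- Let L ⊆ ℝ^n be a linear subspace and P : ℝ^n → L the orthogonal projection onto L. Suppose z ∈ ℝ^n_+ \ {0} and i ∈ {1,...,n} are such that ‖(Pz)^+‖₁ ≤ (1/2)‖z‖_∞ and ‖z‖_∞ = z_i. Let D = I + e_i e_iᵀ (the diagonal matrix doubling the i-th coordinate) and let DL := {Dx : x ∈ L}. Then σ_i(DL) = 2 σ_i(L) and σ_j(DL) = σ_j(L) for all j ≠ i. -/
/-!
Every feasible `x ∈ L` (that is, `x ≥ 0` and `‖x‖_∞ ≤ 1`) is orthogonal to `z - Pz`, so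
`x_i z_i ≤ ⟪x, z⟫ = ⟪x, Pz⟫ ≤ ‖(Pz)⁺‖₁ ≤ z_i / 2`, whence `x_i ≤ 1/2`. Therefore doubling the
`i`-th coordinate keeps feasible points feasible, and since `D` never decreases `|x_k|`,
`D` maps the feasible set of `L` onto that of `DL`. The values `σ_j` are suprema of the
`j`-th coordinate over these sets.
-/

noncomputable section

/-- The ℓ∞ norm of a vector in ℝⁿ. -/
def linf {n : ℕ} (x : EuclideanSpace ℝ (Fin n)) : ℝ := ⨆ j, |x j|

/-- The ℓ₁ norm of the componentwise positive part `v⁺` of a vector `v ∈ ℝⁿ`. -/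
def l1pos {n : ℕ} (v : EuclideanSpace ℝ (Fin n)) : ℝ := ∑ j, max (v j) 0

open Classical in
/-- The linear map `D = I + eᵢeᵢᵀ`, which doubles the `i`-th coordinate
and fixes all other coordinates. -/
def Dmap {n : ℕ} (i : Fin n) :
    EuclideanSpace ℝ (Fin n) →ₗ[ℝ] EuclideanSpace ℝ (Fin n) where
  toFun x := WithLp.toLp 2 (fun j => if j = i then 2 * x j else x j)
  map_add' x y := by
    ext j
    by_cases h : j = i <;> simp [h, PiLp.add_apply, mul_add]
  map_smul' c x := by
    ext j
    by_cases h : j = i <;> simp [h, PiLp.smul_apply, smul_eq_mul] <;> ring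

/-- `σ_j(M) := max {x_j : x ∈ M ∩ ℝⁿ₊, ‖x‖_∞ ≤ 1}`. -/
def sigmaJ {n : ℕ} (M : Submodule ℝ (EuclideanSpace ℝ (Fin n))) (j : Fin n) : ℝ :=
  sSup {t | ∃ x ∈ M, (∀ k, 0 ≤ x k) ∧ linf x ≤ 1 ∧ x j = t}

section

variable {n : ℕ} {i : Fin n}

lemma abs_apply_le_linf (x : EuclideanSpace ℝ (Fin n)) (j : Fin n) : |x j| ≤ linf x :=
  le_ciSup (Set.finite_range fun k => |x k|).bddAbove j

lemma linf_le_iff {x : EuclideanSpace ℝ (Fin n)} {c : ℝ} (hc : 0 ≤ c) :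
    linf x ≤ c ↔ ∀ j, |x j| ≤ c :=
  ⟨fun h j => (abs_apply_le_linf x j).trans h, fun h => Real.iSup_le h hc⟩

lemma linf_pos {x : EuclideanSpace ℝ (Fin n)} (hx : x ≠ 0) : 0 < linf x := by
  obtain ⟨j, hj⟩ : ∃ j, x j ≠ 0 := by
    by_contra! h
    exact hx (PiLp.ext h)
  exact (abs_pos.mpr hj).trans_le (abs_apply_le_linf x j)

lemma inner_eq_sum_mul (x y : EuclideanSpace ℝ (Fin n)) : inner ℝ x y = ∑ k, x k * y k := by
  simp [PiLp.inner_apply, mul_comm]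

lemma inner_le_l1pos {x : EuclideanSpace ℝ (Fin n)} (hx0 : ∀ k, 0 ≤ x k) (hx1 : ∀ k, x k ≤ 1)
    (v : EuclideanSpace ℝ (Fin n)) : inner ℝ x v ≤ l1pos v := by
  rw [inner_eq_sum_mul, l1pos]
  refine Finset.sum_le_sum fun k _ => ?_
  calc x k * v k ≤ x k * max (v k) 0 := mul_le_mul_of_nonneg_left (le_max_left _ _) (hx0 k)
    _ ≤ max (v k) 0 := mul_le_of_le_one_left (le_max_right _ _) (hx1 k)

lemma apply_mul_apply_le_inner {x z : EuclideanSpace ℝ (Fin n)} (hx0 : ∀ k, 0 ≤ x k)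
    (hz0 : ∀ k, 0 ≤ z k) (i : Fin n) : x i * z i ≤ inner ℝ x z := by
  rw [inner_eq_sum_mul]
  exact Finset.single_le_sum (fun k _ => mul_nonneg (hx0 k) (hz0 k)) (Finset.mem_univ i)

lemma apply_mul_le_l1pos_orthogonalProjectionOnto 
    {L : Submodule ℝ (EuclideanSpace ℝ (Fin n))} {x z : EuclideanSpace ℝ (Fin n)} (hxL : x ∈ L)
    (hx0 : ∀ k, 0 ≤ x k) (hx1 : ∀ k, x k ≤ 1) (hz0 : ∀ k, 0 ≤ z k) (i : Fin n) :
    x i * z i ≤ l1pos (L.orthogonalProjectionOnto z : EuclideanSpace ℝ (Fin n)) :=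
  calc x i * z i ≤ inner ℝ x z := apply_mul_apply_le_inner hx0 hz0 i
    _ = inner ℝ x (L.orthogonalProjectionOnto z : EuclideanSpace ℝ (Fin n)) :=
      (L.inner_orthogonalProjectionOnto_eq_of_mem_left ⟨x, hxL⟩ z).symm
    _ ≤ _ := inner_le_l1pos hx0 hx1 _

def feasibleSet (M : Submodule ℝ (EuclideanSpace ℝ (Fin n))) :
    Set (EuclideanSpace ℝ (Fin n)) :=
  {x | x ∈ M ∧ (∀ k, 0 ≤ x k) ∧ linf x ≤ 1}

lemma sigmaJ_eq_sSup_image (M : Submodule ℝ (EuclideanSpace ℝ (Fin n))) (j : Fin n) :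
    sigmaJ M j = sSup ((fun x => x j) '' feasibleSet M) := by
  simp only [sigmaJ, feasibleSet, Set.image, Set.mem_ofPred_eq, and_assoc]

lemma apply_le_half_of_mem_feasibleSet {L : Submodule ℝ (EuclideanSpace ℝ (Fin n))}
    {z : EuclideanSpace ℝ (Fin n)} (hz0 : ∀ j, 0 ≤ z j) (hzne : z ≠ 0)
    (hzi : linf z = z i)
    (hPz : l1pos (L.orthogonalProjectionOnto z : EuclideanSpace ℝ (Fin n)) ≤ 1 / 2 * linf z)
    {x : EuclideanSpace ℝ (Fin n)} (hx : x ∈ feasibleSet L) : x i ≤ 1 / 2 := by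
  obtain ⟨hxL, hx0, hx1⟩ := hx
  have hzi_pos : 0 < z i := hzi ▸ linf_pos hzne
  have hx_le_one k : x k ≤ 1 := (le_abs_self _).trans ((linf_le_iff zero_le_one).mp hx1 k)
  refine le_of_mul_le_mul_right ?_ hzi_pos
  calc x i * z i ≤ _ := apply_mul_le_l1pos_orthogonalProjectionOnto hxL hx0 hx_le_one hz0 i
    _ ≤ 1 / 2 * z i := hzi ▸ hPz

@[simp]
lemma Dmap_apply_self (x : EuclideanSpace ℝ (Fin n)) : Dmap i x i = 2 * x i := by
  simp [Dmap]

@[simp]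
lemma Dmap_apply_of_ne (x : EuclideanSpace ℝ (Fin n)) {j : Fin n} (h : j ≠ i) :
    Dmap i x j = x j := by
  simp [Dmap, h]

lemma Dmap_apply_nonneg_iff (x : EuclideanSpace ℝ (Fin n)) (j : Fin n) :
    0 ≤ Dmap i x j ↔ 0 ≤ x j := by
  rcases eq_or_ne j i with rfl | h
  · simp
  · simp [h]

lemma abs_apply_le_abs_Dmap_apply (x : EuclideanSpace ℝ (Fin n)) (j : Fin n) :
    |x j| ≤ |Dmap i x j| := by
  rcases eq_or_ne j i with rfl | h
  · rw [Dmap_apply_self, abs_mul, abs_two]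
    linarith [abs_nonneg (x j)]
  · simp [h]

lemma feasibleSet_map_Dmap {L : Submodule ℝ (EuclideanSpace ℝ (Fin n))}
    (h : ∀ x ∈ feasibleSet L, x i ≤ 1 / 2) :
    feasibleSet (L.map (Dmap i)) = Dmap i '' feasibleSet L := by
  ext y
  constructor
  · rintro ⟨⟨x, hxL, rfl⟩, hy0, hy1⟩
    refine ⟨x, ⟨hxL, fun k => (Dmap_apply_nonneg_iff x k).mp (hy0 k), ?_⟩, rfl⟩
    rw [linf_le_iff zero_le_one] at hy1 ⊢
    exact fun k => (abs_apply_le_abs_Dmap_apply x k).trans (hy1 k)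
  · rintro ⟨x, hx, rfl⟩
    have hxi := h x hx
    obtain ⟨hxL, hx0, hx1⟩ := hx
    refine ⟨Submodule.mem_map_of_mem hxL, fun k => (Dmap_apply_nonneg_iff x k).mpr (hx0 k), ?_⟩
    rw [linf_le_iff zero_le_one] at hx1 ⊢
    intro k
    rcases eq_or_ne k i with rfl | hk
    · rw [Dmap_apply_self, abs_of_nonneg (by linarith [hx0 k])]
      linarith
    · rw [Dmap_apply_of_ne x hk]
      exact hx1 k

end

/-- If `z ∈ ℝⁿ₊ \ {0}` satisfies `‖(Pz)⁺‖₁ ≤ (1/2)‖z‖_∞ = (1/2) z_i`, where `P` is the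
orthogonal projection onto `L`, then rescaling by `D = I + eᵢeᵢᵀ` gives
`σ_i(DL) = 2σ_i(L)` and `σ_j(DL) = σ_j(L)` for `j ≠ i`. -/
theorem sigmaJ_rescale {n : ℕ} (L : Submodule ℝ (EuclideanSpace ℝ (Fin n)))
    (z : EuclideanSpace ℝ (Fin n)) (hz0 : ∀ j, 0 ≤ z j) (hzne : z ≠ 0)
    (i : Fin n) (hzi : linf z = z i)
    (hPz : l1pos ((L.orthogonalProjection z : L) : EuclideanSpace ℝ (Fin n))
      ≤ (1 / 2) * linf z) :
    sigmaJ (L.map (Dmap i)) i = 2 * sigmaJ L i ∧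
      ∀ j, j ≠ i → sigmaJ (L.map (Dmap i)) j = sigmaJ L j := by
  have hfeas := feasibleSet_map_Dmap fun x hx =>
    apply_le_half_of_mem_feasibleSet hz0 hzne hzi hPz hx
  simp only [sigmaJ_eq_sSup_image, hfeas, Set.image_image]
  refine ⟨?_, fun j hj => by simp only [Dmap_apply_of_ne _ hj]⟩
  rw [← smul_eq_mul, ← Real.sSup_smul_of_nonneg zero_le_two, ← Set.image_smul, Set.image_image]
  simp only [Dmap_apply_self, smul_eq_mul]
end
end
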